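/- arXiv:2306.10501 — 4 statements merged into one kernel-verified Lean document; each statement's English description precedes it below -/
import Mathlib

section
/- In an m₁×m₂ grid, a light beam starting at (x₁,x₂) passes through (y₁,y₂) if and only if there exist j, k ∈ {0,1} such that 2·gcd(m₁,m₂) divides (x₂ − x₁) + ((−1)^j·y₂ + (−1)^k·y₁). -/
/-!
The triangle wave `m - |m - a % (2m)|` is `2m`-periodic, even, and the identity on `[0, m]`, so
it takes a value `y ∈ [0, m]` exactly at `a ≡ ±y (mod 2m)`. The beam meets `(y₁, y₂)` at time `k`
iff `k ≡ ±y₁ - x₁ (mod 2m₁)` and `k ≡ ±y₂ - x₂ (mod 2m₂)`, and by the Chinese remainder theorem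
for non-coprime moduli such a `k` exists iff the two residues agree modulo
`gcd(2m₁, 2m₂) = 2 gcd(m₁, m₂)`.
-/

theorem Int.add_modEq_iff_modEq_sub {n a b c : ℤ} : a + b ≡ c [ZMOD n] ↔ b ≡ c - a [ZMOD n] := by
  simp only [← AddCommGroup.modEq_iff_intModEq, AddCommGroup.modEq_sub_iff_add_modEq']

theorem Int.exists_modEq_and_modEq_iff_modEq_gcd {n₁ n₂ a b : ℤ} :
    (∃ k, k ≡ a [ZMOD n₁] ∧ k ≡ b [ZMOD n₂]) ↔ a ≡ b [ZMOD n₁.gcd n₂] := by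
  constructor
  · rintro ⟨k, h₁, h₂⟩
    exact (h₁.of_dvd (Int.gcd_dvd_left ..)).symm.trans (h₂.of_dvd (Int.gcd_dvd_right ..))
  · intro h
    obtain ⟨t, ht⟩ := Int.modEq_iff_dvd.1 h
    refine ⟨a + n₁ * (n₁.gcdA n₂ * t), Int.modEq_add_fac_self, Int.modEq_iff_dvd.2 ?_⟩
    exact ⟨n₁.gcdB n₂ * t, by linear_combination ht + t * Int.gcd_eq_gcd_ab n₁ n₂⟩

theorem Int.units_eq_neg_one_pow (ε : ℤˣ) : ∃ j : ℕ, j ≤ 1 ∧ (ε : ℤ) = (-1) ^ j := by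
  rcases Int.units_eq_one_or ε with rfl | rfl
  exacts [⟨0, zero_le_one, rfl⟩, ⟨1, le_rfl, rfl⟩]

theorem Int.exists_units_iff_exists_neg_one_pow {P : ℤ → ℤ → Prop} :
    (∃ ε δ : ℤˣ, P ε δ) ↔ ∃ j k : ℕ, j ≤ 1 ∧ k ≤ 1 ∧ P ((-1) ^ j) ((-1) ^ k) := by
  constructor
  · rintro ⟨ε, δ, h⟩
    obtain ⟨j, hj, hε⟩ := Int.units_eq_neg_one_pow ε
    obtain ⟨k, hk, hδ⟩ := Int.units_eq_neg_one_pow δ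
    exact ⟨j, k, hj, hk, hε ▸ hδ ▸ h⟩
  · rintro ⟨j, k, -, -, h⟩
    exact ⟨(-1) ^ j, (-1) ^ k, by push_cast; exact h⟩

def triangleWave (m a : ℤ) : ℤ := m - |m - a % (2 * m)|

section triangleWave

variable {m : ℤ}

theorem triangleWave_congr {a b : ℤ} (h : a ≡ b [ZMOD 2 * m]) :
    triangleWave m a = triangleWave m b := by
  rw [triangleWave, triangleWave, h.eq]

theorem triangleWave_neg (hm : 0 ≤ m) (a : ℤ) : triangleWave m (-a) = triangleWave m a := by
  rw [triangleWave, triangleWave, Int.neg_emod]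
  split_ifs with h
  · rw [Int.emod_eq_zero_of_dvd h]
  · rw [Int.natCast_natAbs, abs_of_nonneg (by omega : 0 ≤ 2 * m),
      show m - (2 * m - a % (2 * m)) = -(m - a % (2 * m)) by ring, abs_neg]

theorem triangleWave_of_le {y : ℤ} (hy₀ : 0 ≤ y) (hy : y ≤ m) : triangleWave m y = y := by
  rcases hy₀.eq_or_lt with rfl | hy₀
  · simp [triangleWave, abs_of_nonneg hy]
  rw [triangleWave, Int.emod_eq_of_lt hy₀.le (by omega), abs_of_nonneg (by omega)]
  ring

theorem triangleWave_eq_iff {a y : ℤ} (hy₀ : 0 ≤ y) (hy : y ≤ m) :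
    triangleWave m a = y ↔ ∃ ε : ℤˣ, a ≡ ε * y [ZMOD 2 * m] := by
  constructor
  · intro h
    have hr := Int.mod_modEq a (2 * m)
    rcases abs_eq_abs.1 (show |m - a % (2 * m)| = |m - y| by
      rw [abs_of_nonneg (by omega : 0 ≤ m - y)]; unfold triangleWave at h; omega) with h' | h'
    · exact ⟨1, hr.symm.trans (by rw [show a % (2 * m) = y by omega, Units.val_one, one_mul])⟩
    · exact ⟨-1, hr.symm.trans (Int.modEq_iff_dvd.2 ⟨-1, by push_cast; omega⟩)⟩
  · rintro ⟨ε, h⟩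
    rw [triangleWave_congr h]
    rcases Int.units_eq_one_or ε with rfl | rfl
    · rw [Units.val_one, one_mul, triangleWave_of_le hy₀ hy]
    · rw [Units.val_neg, Units.val_one, neg_one_mul, triangleWave_neg (hy₀.trans hy),
        triangleWave_of_le hy₀ hy]

end triangleWave

theorem light_passes_through_iff_general (m₁ m₂ : ℕ)
    (x₁ x₂ y₁ y₂ : ℤ)
    (hy₁ : 0 ≤ y₁ ∧ y₁ ≤ m₁) (hy₂ : 0 ≤ y₂ ∧ y₂ ≤ m₂)
    (T₁ T₂ : ℤ → ℤ)
    (hT₁ : ∀ k : ℤ, T₁ k = m₁ - |(m₁ : ℤ) - ((x₁ + k) % (2 * m₁))|)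
    (hT₂ : ∀ k : ℤ, T₂ k = m₂ - |(m₂ : ℤ) - ((x₂ + k) % (2 * m₂))|) :
    (∃ k : ℤ, T₁ k = y₁ ∧ T₂ k = y₂) ↔
      (∃ j k : ℕ, j ≤ 1 ∧ k ≤ 1 ∧
        (2 * (Nat.gcd m₁ m₂ : ℤ)) ∣ (x₂ - x₁) + ((-1) ^ j * y₂ + (-1) ^ k * y₁)) := by
  have hT₁' : ∀ k, T₁ k = triangleWave m₁ (x₁ + k) := hT₁
  have hT₂' : ∀ k, T₂ k = triangleWave m₂ (x₂ + k) := hT₂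
  have hgcd : ((2 * m₁ : ℤ).gcd (2 * m₂) : ℤ) = 2 * (m₁.gcd m₂ : ℤ) := by
    rw [Int.gcd_mul_left, Int.gcd_natCast_natCast]; push_cast; rfl
  calc (∃ k, T₁ k = y₁ ∧ T₂ k = y₂)
      ↔ ∃ ε₁ ε₂ : ℤˣ, ∃ k, k ≡ ε₁ * y₁ - x₁ [ZMOD 2 * m₁] ∧ k ≡ ε₂ * y₂ - x₂ [ZMOD 2 * m₂] := by
        simp only [hT₁', hT₂', triangleWave_eq_iff hy₁.1 hy₁.2, triangleWave_eq_iff hy₂.1 hy₂.2,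
          Int.add_modEq_iff_modEq_sub]
        exact ⟨fun ⟨k, ⟨ε₁, h₁⟩, ε₂, h₂⟩ => ⟨ε₁, ε₂, k, h₁, h₂⟩,
          fun ⟨ε₁, ε₂, k, h₁, h₂⟩ => ⟨k, ⟨ε₁, h₁⟩, ε₂, h₂⟩⟩
    _ ↔ ∃ ε₁ ε₂ : ℤˣ, ε₂ * y₂ - x₂ ≡ ε₁ * y₁ - x₁ [ZMOD 2 * m₁.gcd m₂] := by
        simp only [Int.exists_modEq_and_modEq_iff_modEq_gcd, hgcd, Int.modEq_comm]
    _ ↔ ∃ ε₂ ε₁ : ℤˣ, 2 * (m₁.gcd m₂ : ℤ) ∣ (x₂ - x₁) + (ε₂ * y₂ + ε₁ * y₁) := by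
        constructor
        · rintro ⟨ε₁, ε₂, h⟩
          exact ⟨-ε₂, ε₁, by convert Int.modEq_iff_dvd.1 h using 1; push_cast; ring⟩
        · rintro ⟨ε₂, ε₁, h⟩
          exact ⟨ε₁, -ε₂, Int.modEq_iff_dvd.2 (by convert h using 1; push_cast; ring)⟩
    _ ↔ _ := Int.exists_units_iff_exists_neg_one_pow
        (P := fun ε δ ↦ 2 * (m₁.gcd m₂ : ℤ) ∣ (x₂ - x₁) + (ε * y₂ + δ * y₁))

theorem light_passes_through_iff (m₁ m₂ : ℕ) (hm₁ : 0 < m₁) (hm₂ : 0 < m₂)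
    (x₁ x₂ y₁ y₂ : ℤ)
    (hx₁ : 0 ≤ x₁ ∧ x₁ ≤ m₁) (hx₂ : 0 ≤ x₂ ∧ x₂ ≤ m₂)
    (hy₁ : 0 ≤ y₁ ∧ y₁ ≤ m₁) (hy₂ : 0 ≤ y₂ ∧ y₂ ≤ m₂)
    (T₁ T₂ : ℤ → ℤ)
    (hT₁ : ∀ k : ℤ, T₁ k = m₁ - |(m₁ : ℤ) - ((x₁ + k) % (2 * m₁))|)
    (hT₂ : ∀ k : ℤ, T₂ k = m₂ - |(m₂ : ℤ) - ((x₂ + k) % (2 * m₂))|) :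
    (∃ k : ℤ, T₁ k = y₁ ∧ T₂ k = y₂) ↔
      (∃ j k : ℕ, j ≤ 1 ∧ k ≤ 1 ∧
        (2 * (Nat.gcd m₁ m₂ : ℤ)) ∣ (x₂ - x₁) + ((-1) ^ j * y₂ + (-1) ^ k * y₁)) :=
  light_passes_through_iff_general m₁ m₂ x₁ x₂ y₁ y₂ hy₁ hy₂ T₁ T₂ hT₁ hT₂
end

section
/- In an m₁×m₂ grid, two lattice points P₁ = (x₁,x₂) and P₂ = (y₁,y₂) can be joined by a sequence of unit-diagonal moves (each move changes both coordinates by ±1, reflecting via the triangle wave at the boundary) if and only if x₁ + x₂ ≡ y₁ + y₂ (mod 2). -/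
/-!
Each step changes the parity of both coordinates, so the parity of `x₁ + x₂` is invariant.
Conversely, a step between grid points can be taken backwards, so it suffices to reach every
grid point `(a, b)` from the base point `((a + b) % 2, 0)`: zigzag along the bottom edge,
`(a, 0) → (a + 1, 1) → (a + 2, 0)`, and then climb one row per step, entering `(a, b + 1)`
from `(a - 1, b)`, or from `(1, b)` when `a = 0`.
-/

/-- One diagonal step in the `m₁ × m₂` grid: each coordinate changes by `±1`
(with reflection at the boundary enforced by staying in range). -/
def DiagStep (m₁ m₂ : ℕ) (P Q : ℕ × ℕ) : Prop :=
  (Q.1 = P.1 + 1 ∨ Q.1 + 1 = P.1) ∧ (Q.2 = P.2 + 1 ∨ Q.2 + 1 = P.2) ∧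
    Q.1 ≤ m₁ ∧ Q.2 ≤ m₂

namespace DiagStep

open Relation

variable {m₁ m₂ : ℕ} {P Q : ℕ × ℕ}

lemma parity_eq (h : DiagStep m₁ m₂ P Q) : (P.1 + P.2) % 2 = (Q.1 + Q.2) % 2 := by
  obtain ⟨h₁, h₂, -, -⟩ := h
  omega

lemma symm (h : DiagStep m₁ m₂ P Q) (hP₁ : P.1 ≤ m₁) (hP₂ : P.2 ≤ m₂) : DiagStep m₁ m₂ Q P := by
  obtain ⟨h₁, h₂, -, -⟩ := h
  exact ⟨by omega, by omega, hP₁, hP₂⟩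

lemma reflTransGen_parity_eq (h : ReflTransGen (DiagStep m₁ m₂) P Q) :
    (P.1 + P.2) % 2 = (Q.1 + Q.2) % 2 := by
  induction h with
  | refl => rfl
  | tail _ hstep ih => exact ih.trans hstep.parity_eq

lemma reflTransGen_le (hP₁ : P.1 ≤ m₁) (hP₂ : P.2 ≤ m₂)
    (h : ReflTransGen (DiagStep m₁ m₂) P Q) : Q.1 ≤ m₁ ∧ Q.2 ≤ m₂ := by
  cases h.cases_tail with
  | inl hPQ => exact hPQ ▸ ⟨hP₁, hP₂⟩
  | inr hstep =>
    obtain ⟨_, _, ⟨-, -, hQ₁, hQ₂⟩⟩ := hstep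
    exact ⟨hQ₁, hQ₂⟩

lemma reflTransGen_symm (hP₁ : P.1 ≤ m₁) (hP₂ : P.2 ≤ m₂)
    (h : ReflTransGen (DiagStep m₁ m₂) P Q) : ReflTransGen (DiagStep m₁ m₂) Q P := by
  induction h with
  | refl => rfl
  | @tail R _ hPR hstep ih =>
    obtain ⟨hR₁, hR₂⟩ := reflTransGen_le hP₁ hP₂ hPR
    exact .head (hstep.symm hR₁ hR₂) ih

lemma reflTransGen_mod_two_zero (hm₂ : 0 < m₂) :
    ∀ a ≤ m₁, ReflTransGen (DiagStep m₁ m₂) (a % 2, 0) (a, 0) := by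
  refine Nat.twoStepInduction (fun _ ↦ .refl) (fun _ ↦ .refl) fun a ih _ ha ↦ ?_
  have hup : DiagStep m₁ m₂ (a, 0) (a + 1, 1) := ⟨by omega, by omega, by omega, hm₂⟩
  have hdown : DiagStep m₁ m₂ (a + 1, 1) (a + 2, 0) := ⟨by omega, by omega, ha, by omega⟩
  simpa using ((ih (by omega)).tail hup).tail hdown

lemma reflTransGen_parity_zero (hm₁ : 0 < m₁) (hm₂ : 0 < m₂) {a b : ℕ}
    (ha : a ≤ m₁) (hb : b ≤ m₂) :
    ReflTransGen (DiagStep m₁ m₂) ((a + b) % 2, 0) (a, b) := by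
  induction b generalizing a with
  | zero => exact reflTransGen_mod_two_zero hm₂ a ha
  | succ b ih =>
    obtain rfl | ha₀ := Nat.eq_zero_or_pos a
    · have hbelow := ih hm₁ (by omega)
      rw [show (1 + b) % 2 = (0 + (b + 1)) % 2 by omega] at hbelow
      exact hbelow.tail ⟨by omega, by omega, ha, hb⟩
    · have hbelow := ih (a := a - 1) (by omega) (by omega)
      rw [show (a - 1 + b) % 2 = (a + (b + 1)) % 2 by omega] at hbelow
      exact hbelow.tail ⟨by omega, by omega, ha, hb⟩

end DiagStep

theorem same_orbit_iff_parity (m₁ m₂ : ℕ) (hm₁ : 0 < m₁) (hm₂ : 0 < m₂)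
    (x₁ x₂ y₁ y₂ : ℕ) (hx₁ : x₁ ≤ m₁) (hx₂ : x₂ ≤ m₂) (hy₁ : y₁ ≤ m₁) (hy₂ : y₂ ≤ m₂) :
    Relation.ReflTransGen (DiagStep m₁ m₂) (x₁, x₂) (y₁, y₂) ↔
      (x₁ + x₂) % 2 = (y₁ + y₂) % 2 := by
  refine ⟨DiagStep.reflTransGen_parity_eq, fun hparity ↦ ?_⟩
  have hx := DiagStep.reflTransGen_parity_zero hm₁ hm₂ hx₁ hx₂
  have hy := DiagStep.reflTransGen_parity_zero hm₁ hm₂ hy₁ hy₂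
  rw [← hparity] at hy
  have hbase : (x₁ + x₂) % 2 ≤ m₁ := by omega
  exact (DiagStep.reflTransGen_symm hbase m₂.zero_le hx).trans hy
end

section
/- In the p-dimensional grid with diagonal moves (each move changes all p coordinates by ±1, with reflection at the boundaries so 0 ↦ 1 and mᵢ ↦ mᵢ−1), two points P = (x₁,...,x_p) and Q = (y₁,...,y_p) are in the same orbit if and only if their indices agree: [x₁+x_j]₂ = [y₁+y_j]₂ for all j = 2,...,p, where [a]₂ denotes a mod 2. Consequently the grid splits into exactly 2^{p−1} orbits. -/
/-!
Every step flips the parity of every coordinate, so the parities of the sums `x₁ + xⱼ` are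
invariant. Conversely, stepping each coordinate `≥ 2` down and reflecting each coordinate
`≤ 1` lowers `∑ (xᵢ - 1)` until the point lies in `{0,1}^p`; if needed, one more step flipping every
bit reaches the point whose coordinates are the parities `(x₁ + xᵢ) mod 2`. Steps between
points of the grid are reversible, so two points with the same index meet there.
-/

/-- One diagonal step in the `p`-dimensional grid: each coordinate changes by `±1`
(with reflection at the boundary enforced by staying in range). -/
def SpatialDiagStep {p : ℕ} (m : Fin p → ℕ) (P Q : Fin p → ℕ) : Prop :=
  ∀ i, (Q i = P i + 1 ∨ Q i + 1 = P i) ∧ Q i ≤ m i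

namespace SpatialDiagStep

variable {p : ℕ} {m : Fin p → ℕ}

theorem le_bound {P Q : Fin p → ℕ} (h : SpatialDiagStep m P Q) (i : Fin p) : Q i ≤ m i :=
  (h i).2

theorem symm {P Q : Fin p → ℕ} (h : SpatialDiagStep m P Q) (hP : ∀ i, P i ≤ m i) :
    SpatialDiagStep m Q P :=
  fun i => ⟨by have := (h i).1; omega, hP i⟩

theorem add_mod_two_eq {P Q : Fin p → ℕ} (h : SpatialDiagStep m P Q) (i j : Fin p) :
    (P i + P j) % 2 = (Q i + Q j) % 2 := by
  have hi := (h i).1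
  have hj := (h j).1
  omega

def fold (X : Fin p → ℕ) : Fin p → ℕ :=
  fun i => if 2 ≤ X i then X i - 1 else 1 - X i

theorem of_fold (hm : ∀ i, 0 < m i) {X : Fin p → ℕ} (hX : ∀ i, X i ≤ m i) :
    SpatialDiagStep m X (fold X) := by
  intro i
  have := hX i
  have := hm i
  unfold fold
  split_ifs <;> omega

theorem sum_fold_sub_one_lt {X : Fin p → ℕ} {k : Fin p} (hk : 2 ≤ X k) :
    ∑ i, (fold X i - 1) < ∑ i, (X i - 1) := by
  refine Finset.sum_lt_sum (fun i _ => ?_) ⟨k, Finset.mem_univ k, ?_⟩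
  · unfold fold
    split_ifs <;> omega
  · simp only [fold, if_pos hk]
    omega

theorem of_le_one (hm : ∀ i, 0 < m i) {Y : Fin p → ℕ} (hY : ∀ i, Y i ≤ 1) :
    SpatialDiagStep m Y (fun i => 1 - Y i) :=
  fun i => by dsimp only; have := hY i; have := hm i; omega

end SpatialDiagStep

namespace Relation.ReflTransGen

open SpatialDiagStep

variable {p : ℕ} {m : Fin p → ℕ}

theorem spatialDiagStep_le_bound {P Q : Fin p → ℕ}
    (h : ReflTransGen (SpatialDiagStep m) P Q) (hP : ∀ i, P i ≤ m i) (i : Fin p) :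
    Q i ≤ m i := by
  induction h with
  | refl => exact hP i
  | tail _ hstep => exact hstep.le_bound i

theorem spatialDiagStep_symm {P Q : Fin p → ℕ}
    (h : ReflTransGen (SpatialDiagStep m) P Q) (hP : ∀ i, P i ≤ m i) :
    ReflTransGen (SpatialDiagStep m) Q P := by
  induction h with
  | refl => exact .refl
  | tail hPb hstep ih => exact .head (hstep.symm (hPb.spatialDiagStep_le_bound hP)) ih

theorem spatialDiagStep_add_mod_two_eq {P Q : Fin p → ℕ}
    (h : ReflTransGen (SpatialDiagStep m) P Q) (i j : Fin p) :
    (P i + P j) % 2 = (Q i + Q j) % 2 := by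
  induction h with
  | refl => rfl
  | tail _ hstep ih => exact ih.trans (hstep.add_mod_two_eq i j)

end Relation.ReflTransGen

open Relation SpatialDiagStep

variable {p : ℕ} {m : Fin p → ℕ}

theorem exists_reflTransGen_spatialDiagStep_le_one (hm : ∀ i, 0 < m i) (X : Fin p → ℕ)
    (hX : ∀ i, X i ≤ m i) :
    ∃ Y, ReflTransGen (SpatialDiagStep m) X Y ∧ ∀ i, Y i ≤ 1 := by
  induction hN : ∑ i, (X i - 1) using Nat.strong_induction_on generalizing X with
  | _ N ih =>
    by_cases hsmall : ∀ i, X i ≤ 1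
    · exact ⟨X, .refl, hsmall⟩
    · obtain ⟨k, hk⟩ := not_forall.mp hsmall
      have hstep := of_fold hm hX
      obtain ⟨Y, hY, hY1⟩ :=
        ih _ (hN ▸ sum_fold_sub_one_lt (by omega : 2 ≤ X k)) _ hstep.le_bound rfl
      exact ⟨Y, .head hstep hY, hY1⟩

theorem exists_reflTransGen_spatialDiagStep_eq_add_mod_two (hm : ∀ i, 0 < m i)
    (X : Fin p → ℕ) (hX : ∀ i, X i ≤ m i) (k : Fin p) :
    ∃ Y, ReflTransGen (SpatialDiagStep m) X Y ∧ ∀ i, Y i = (X k + X i) % 2 := by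
  obtain ⟨Y, hXY, hY1⟩ := exists_reflTransGen_spatialDiagStep_le_one hm X hX
  have hidx i := hXY.spatialDiagStep_add_mod_two_eq k i
  by_cases hk : Y k = 0
  · refine ⟨Y, hXY, fun i => ?_⟩
    have := hY1 i
    have := hidx i
    omega
  · refine ⟨_, hXY.tail (of_le_one hm hY1), fun i => ?_⟩
    have := hY1 i
    have := hY1 k
    have := hidx i
    omega

theorem same_orbit_iff_index_eq (p : ℕ) (hp : 2 ≤ p) (m : Fin p → ℕ)
    (hm : ∀ i, 0 < m i) (P Q : Fin p → ℕ)
    (hP : ∀ i, P i ≤ m i) (hQ : ∀ i, Q i ≤ m i) :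
    Relation.ReflTransGen (SpatialDiagStep m) P Q ↔
      ∀ j : Fin p, (P ⟨0, by omega⟩ + P j) % 2 = (Q ⟨0, by omega⟩ + Q j) % 2 := by
  refine ⟨fun h j => h.spatialDiagStep_add_mod_two_eq _ j, fun h => ?_⟩
  obtain ⟨Y, hPY, hY⟩ := exists_reflTransGen_spatialDiagStep_eq_add_mod_two hm P hP ⟨0, by omega⟩
  obtain ⟨Z, hQZ, hZ⟩ := exists_reflTransGen_spatialDiagStep_eq_add_mod_two hm Q hQ ⟨0, by omega⟩
  have hYZ : Y = Z := funext fun i => by rw [hY, hZ, h]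
  exact hPY.trans (hYZ ▸ hQZ.spatialDiagStep_symm hQ)
end

section
/- For the positive circular sequence with first term t and height m, the period polynomial satisfies the factorization (1−x)²·f⁺(x,t,m) = (t−1)x^{2m+1} − t·x^{2m} + 2x^{2m−t+1} − 2x^{m−t+1} + (1−t)x + t; equivalently f⁺(x,t,m) = ((1−x^m)/(1−x))·( x(1−x^{m−t})/(1−x) − x^{m−t+1}(1−x^{t−1})/(1−x) + (t−1)x^m + t ). -/
open Polynomial

/-- The `n`-th term of the positive circular sequence with first term `t`
and height `m`, for `0 ≤ n ≤ 2m - 1`. -/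
noncomputable def circTerm (m t n : ℕ) : ℚ :=
  if n ≤ m - t then (n : ℚ) + t
  else if n ≤ 2 * m - t then (2 * m : ℚ) - t - n
  else (n : ℚ) - (2 * m - t : ℕ)

/-! The sequence `circTerm m t` is piecewise affine with slopes `1, -1, 1`, so
`(1 - X)²` times its generating polynomial only sees the two ends of each affine piece. -/

theorem one_sub_X_sq_mul_sum_Ico_affine {R : Type*} [CommRing R] (α β : R) {a b : ℕ}
    (hab : a ≤ b) :
    (1 - X) ^ 2 * ∑ n ∈ Finset.Ico a b, C (α + β * n) * X ^ n =
      C (α + β * a) * X ^ a + C (β - (α + β * a)) * X ^ (a + 1)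
        - C (α + β * b) * X ^ b + C (α + β * b - β) * X ^ (b + 1) := by
  induction b, hab using Nat.le_induction with
  | base =>
    simp only [Finset.Ico_self, Finset.sum_empty, mul_zero, map_sub, map_add]
    ring
  | succ b hab ih =>
    rw [Finset.sum_Ico_succ_top hab, mul_add, ih]
    push_cast
    simp only [map_add, map_sub, map_mul, map_natCast, map_one]
    ring

theorem circTerm_of_le_sub {m t n : ℕ} (hn : n ≤ m - t) :
    circTerm m t n = t + 1 * n := by
  rw [circTerm, if_pos hn]
  ring

theorem circTerm_of_sub_lt_of_le {m t n : ℕ} (h₁ : m - t < n) (h₂ : n ≤ 2 * m - t) :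
    circTerm m t n = (2 * m - t) + (-1) * n := by
  rw [circTerm, if_neg h₁.not_ge, if_pos h₂]
  ring

theorem circTerm_of_sub_lt {m t n : ℕ} (hn : 2 * m - t < n) :
    circTerm m t n = -((2 * m - t : ℕ) : ℚ) + 1 * n := by
  rw [circTerm, if_neg (by omega), if_neg hn.not_ge]
  ring

theorem period_polynomial_identity_general (m t : ℕ) (ht1 : 1 ≤ t) (htm : t ≤ m) :
    (1 - (X : ℚ[X])) ^ 2 * (∑ n ∈ Finset.range (2 * m), C (circTerm m t n) * X ^ n) =
      C ((t : ℚ) - 1) * X ^ (2 * m + 1) - C (t : ℚ) * X ^ (2 * m)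
        + 2 * X ^ (2 * m - t + 1) - 2 * X ^ (m - t + 1)
        + C (1 - (t : ℚ)) * X + C (t : ℚ) := by
  set p := m - t + 1
  set q := 2 * m - t + 1
  have hpq : p ≤ q := by omega
  have hq : q ≤ 2 * m := by omega
  have firstRise : ∑ n ∈ Finset.Ico 0 p, C (circTerm m t n) * X ^ n =
      ∑ n ∈ Finset.Ico 0 p, C ((t : ℚ) + 1 * n) * X ^ n :=
    Finset.sum_congr rfl fun n hn => by
      rw [Finset.mem_Ico] at hn
      rw [circTerm_of_le_sub (by omega)]
  have fall : ∑ n ∈ Finset.Ico p q, C (circTerm m t n) * X ^ n =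
      ∑ n ∈ Finset.Ico p q, C ((2 * m - t : ℚ) + (-1) * n) * X ^ n :=
    Finset.sum_congr rfl fun n hn => by
      rw [Finset.mem_Ico] at hn
      rw [circTerm_of_sub_lt_of_le (by omega) (by omega)]
  have secondRise : ∑ n ∈ Finset.Ico q (2 * m), C (circTerm m t n) * X ^ n =
      ∑ n ∈ Finset.Ico q (2 * m), C (-((2 * m - t : ℕ) : ℚ) + 1 * n) * X ^ n :=
    Finset.sum_congr rfl fun n hn => by
      rw [Finset.mem_Ico] at hn
      rw [circTerm_of_sub_lt (by omega)]
  rw [Finset.range_eq_Ico, ← Finset.sum_Ico_consecutive _ (Nat.zero_le p) (hpq.trans hq),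
    ← Finset.sum_Ico_consecutive _ hpq hq, firstRise, fall, secondRise, mul_add, mul_add,
    one_sub_X_sq_mul_sum_Ico_affine _ _ (Nat.zero_le p),
    one_sub_X_sq_mul_sum_Ico_affine _ _ hpq, one_sub_X_sq_mul_sum_Ico_affine _ _ hq]
  simp only [p, q]
  push_cast [Nat.cast_sub htm, Nat.cast_sub (by omega : t ≤ 2 * m)]
  simp only [map_add, map_sub, map_mul, map_neg, map_one, map_zero, map_ofNat, map_natCast]
  ring

theorem period_polynomial_identity (m t : ℕ) (hm : 1 ≤ m) (ht1 : 1 ≤ t) (htm : t ≤ m) :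
    (1 - (X : ℚ[X])) ^ 2 * (∑ n ∈ Finset.range (2 * m), C (circTerm m t n) * X ^ n) =
      C ((t : ℚ) - 1) * X ^ (2 * m + 1) - C (t : ℚ) * X ^ (2 * m)
        + 2 * X ^ (2 * m - t + 1) - 2 * X ^ (m - t + 1)
        + C (1 - (t : ℚ)) * X + C (t : ℚ) :=
  period_polynomial_identity_general m t ht1 htm
end
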